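/- Let λ > 0 and P > 0 be real numbers. Then ∫_0^∞ λ e^{−λh} · (ln(1 + P h) − P h/(1 + P h)) dh = (1 + λ/P) · e^{λ/P} · ∫_{λ/P}^∞ (e^{−t}/t) dt − 1. (Equivalently, with the exponential integral Ei(−x) = −∫_x^∞ e^{−t}/t dt for x > 0, the left-hand side equals −[1 + (1 + λ/P)·e^{λ/P}·Ei(−λ/P)], which is the function f(P) appearing in Corollary 1.) -/

import Mathlib

/-!
With `F h = exp (-(λh)) * (1 - log (1 + P h))` one has
`F' = λ e^{-λh} (log (1 + P h) - P h / (1 + P h)) - (λ + P) e^{-λh} / (1 + P h)`,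
`F 0 = 1` and `F → 0` at infinity, so the expected divergence is `-1 + (λ + P)` times the
Laplace transform of `1 / (1 + P h)`. The substitution `t = λ h + λ / P` turns that transform
into `e^{λ/P} / P · ∫_{λ/P}^∞ e^{-t} / t dt`.
-/

open MeasureTheory Set Filter Real Topology

theorem integral_Ioi_comp_mul_add {E : Type*} [NormedAddCommGroup E] [NormedSpace ℝ E]
    (g : ℝ → E) {b : ℝ} (hb : 0 < b) (c : ℝ) :
    ∫ x in Ioi 0, g (b * x + c) = b⁻¹ • ∫ x in Ioi c, g x := by
  rw [integral_comp_mul_left_Ioi (fun x => g (x + c)) 0 hb, mul_zero,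
    ← integral_indicator measurableSet_Ioi, ← integral_indicator measurableSet_Ioi,
    ← integral_add_right_eq_self ((Ioi c).indicator g) c]
  congr 2 with x
  simp [indicator]

theorem log_one_add_le_self {x : ℝ} (hx : -1 < x) : log (1 + x) ≤ x := by
  linarith [log_le_sub_one_of_pos (x := 1 + x) (by linarith)]

theorem div_one_add_le_log_one_add {x : ℝ} (hx : -1 < x) : x / (1 + x) ≤ log (1 + x) := by
  have hpos : 0 < 1 + x := by linarith
  calc x / (1 + x) = 1 - (1 + x)⁻¹ := by field_simp; ring
    _ ≤ log (1 + x) := one_sub_inv_le_log_of_pos hpos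

theorem abs_log_one_add_sub_div_one_add_le {x : ℝ} (hx : 0 ≤ x) :
    |log (1 + x) - x / (1 + x)| ≤ x := by
  have hlower := div_one_add_le_log_one_add (x := x) (by linarith)
  have hupper := log_one_add_le_self (x := x) (by linarith)
  have hdiv : 0 ≤ x / (1 + x) := by positivity
  rw [abs_le]
  constructor <;> linarith

section

variable {lam P : ℝ}

theorem integrableOn_exp_neg_mul_div_one_add_mul (hlam : 0 < lam) (hP : 0 ≤ P) :
    IntegrableOn (fun h => exp (-(lam * h)) / (1 + P * h)) (Ioi 0) := by
  have hexp : IntegrableOn (fun h => exp (-(lam * h))) (Ioi 0) := by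
    simpa using exp_neg_integrableOn_Ioi 0 hlam
  refine Integrable.mono' hexp (Measurable.aestronglyMeasurable (by fun_prop)) ?_
  filter_upwards [ae_restrict_mem measurableSet_Ioi] with h (hh : 0 < h)
  have hden : 1 ≤ 1 + P * h := by nlinarith
  rw [norm_div, norm_of_nonneg (exp_pos _).le, norm_of_nonneg (by linarith)]
  exact div_le_self (exp_pos _).le hden

theorem integral_exp_neg_mul_div_one_add_mul (hlam : 0 < lam) (hP : 0 < P) :
    ∫ h in Ioi 0, exp (-(lam * h)) / (1 + P * h)
      = exp (lam / P) / P * ∫ t in Ioi (lam / P), exp (-t) / t := by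
  have hsubst : ∀ h, exp (-(lam * h)) / (1 + P * h)
      = lam / P * exp (lam / P) * (exp (-(lam * h + lam / P)) / (lam * h + lam / P)) := by
    intro h
    rw [neg_add, exp_add, exp_neg (lam / P)]
    field_simp
    ring
  simp_rw [hsubst]
  rw [integral_const_mul, integral_Ioi_comp_mul_add (fun t => exp (-t) / t) hlam, smul_eq_mul]
  field_simp

theorem integrableOn_mul_exp_neg_mul_mul_log_one_add_sub_div (hlam : 0 < lam) (hP : 0 ≤ P) :
    IntegrableOn (fun h => lam * exp (-(lam * h)) * (log (1 + P * h) - P * h / (1 + P * h)))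
      (Ioi 0) := by
  have hmoment : IntegrableOn (fun h => h * exp (-lam * h)) (Ioi 0) := by
    simpa using integrableOn_rpow_mul_exp_neg_mul_rpow (s := 1) (p := 1) (by norm_num) one_pos hlam
  refine Integrable.mono' (hmoment.const_mul (lam * P))
    (Measurable.aestronglyMeasurable (by fun_prop)) ?_
  filter_upwards [ae_restrict_mem measurableSet_Ioi] with h (hh : 0 < h)
  rw [norm_mul, norm_of_nonneg (by positivity), norm_eq_abs]
  calc lam * exp (-(lam * h)) * |log (1 + P * h) - P * h / (1 + P * h)|
      ≤ lam * exp (-(lam * h)) * (P * h) := by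
        gcongr; exact abs_log_one_add_sub_div_one_add_le (by positivity)
    _ = lam * P * (h * exp (-lam * h)) := by ring_nf

theorem hasDerivAt_exp_neg_mul_mul_one_sub_log {h : ℝ} (hh : 1 + P * h ≠ 0) :
    HasDerivAt (fun h => exp (-(lam * h)) * (1 - log (1 + P * h)))
      (lam * exp (-(lam * h)) * (log (1 + P * h) - P * h / (1 + P * h))
        - (lam + P) * (exp (-(lam * h)) / (1 + P * h))) h := by
  have hexp : HasDerivAt (fun h => exp (-(lam * h))) (exp (-(lam * h)) * -(lam * 1)) h :=
    ((hasDerivAt_id h).const_mul lam).neg.exp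
  have hlog : HasDerivAt (fun h => 1 - log (1 + P * h)) (-((P * 1) / (1 + P * h))) h :=
    (((hasDerivAt_id h).const_mul P).const_add 1).log hh |>.const_sub 1
  refine (hexp.mul hlog).congr_deriv ?_
  have hdiv : P * h / (1 + P * h) = 1 - 1 / (1 + P * h) := by field_simp; ring
  rw [hdiv]
  ring

theorem tendsto_exp_neg_mul_mul_one_sub_log (hlam : 0 < lam) (hP : 0 ≤ P) :
    Tendsto (fun h => exp (-(lam * h)) * (1 - log (1 + P * h))) atTop (𝓝 0) := by
  have hexp : Tendsto (fun h => exp (-(lam * h))) atTop (𝓝 0) :=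
    tendsto_exp_neg_atTop_nhds_zero.comp (tendsto_id.const_mul_atTop hlam)
  have hmul : Tendsto (fun h => lam * h * exp (-(lam * h))) atTop (𝓝 0) := by
    simpa [Function.comp_def, mul_assoc] using
      (tendsto_pow_mul_exp_neg_atTop_nhds_zero 1).comp (tendsto_id.const_mul_atTop hlam)
  have hdom : Tendsto (fun h => exp (-(lam * h)) + P / lam * (lam * h * exp (-(lam * h))))
      atTop (𝓝 0) := by
    simpa using hexp.add (hmul.const_mul (P / lam))
  refine squeeze_zero_norm' ?_ hdom
  filter_upwards [eventually_ge_atTop 0] with h hh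
  have hPh : 0 ≤ P * h := by positivity
  have hlog_nonneg : 0 ≤ log (1 + P * h) := log_nonneg (by linarith)
  have hlog_le := log_one_add_le_self (x := P * h) (by linarith)
  rw [norm_mul, norm_of_nonneg (exp_pos _).le, norm_eq_abs]
  calc exp (-(lam * h)) * |1 - log (1 + P * h)| ≤ exp (-(lam * h)) * (1 + P * h) := by
        gcongr; rw [abs_le]; constructor <;> linarith
    _ = _ := by field_simp

end

open MeasureTheory in
/-- Expected KL divergence under an exponentially distributed channel gain (`M = 1`):
`∫_0^∞ λe^{−λh}(ln(1+Ph) − Ph/(1+Ph)) dh = (1 + λ/P)·e^{λ/P}·∫_{λ/P}^∞ e^{−t}/t dt − 1`,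
which equals `−[1 + (1 + λ/P)·e^{λ/P}·Ei(−λ/P)]`, the function `f(P)` of Corollary 1. -/
theorem expected_klDiv_exponential (lam P : ℝ) (hlam : 0 < lam) (hP : 0 < P) :
    (∫ h in Set.Ioi (0 : ℝ),
        lam * Real.exp (-(lam * h)) *
          (Real.log (1 + P * h) - P * h / (1 + P * h)))
      = (1 + lam / P) * Real.exp (lam / P) *
          (∫ t in Set.Ioi (lam / P), Real.exp (-t) / t) - 1 := by
  have hf := integrableOn_mul_exp_neg_mul_mul_log_one_add_sub_div hlam hP.le
  have hk := (integrableOn_exp_neg_mul_div_one_add_mul hlam hP.le).const_mul (lam + P)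
  have hFTC := integral_Ioi_of_hasDerivAt_of_tendsto'
    (fun h (hh : 0 ≤ h) => hasDerivAt_exp_neg_mul_mul_one_sub_log (lam := lam) (by positivity))
    (hf.sub hk) (tendsto_exp_neg_mul_mul_one_sub_log hlam hP.le)
  rw [integral_sub hf hk, integral_const_mul, integral_exp_neg_mul_div_one_add_mul hlam hP] at hFTC
  simp only [mul_zero, neg_zero, exp_zero, add_zero, log_one, sub_zero, mul_one] at hFTC
  have hcoef : (1 + lam / P) * exp (lam / P) = (lam + P) * (exp (lam / P) / P) := by
    field_simp; ring
  rw [hcoef]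
  linarith
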